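/- arXiv:2210.03563 — 7 statements merged into one kernel-verified Lean document; each statement's English description precedes it below -/
import Mathlib

section
/- Let F be a field, n a positive integer not divisible by char(F), ζ_n a primitive n-th root of unity, and p a prime dividing n such that p does not divide the order o_F(ζ_n) of ζ_n in F̄ˣ/Fˣ. Then ζ_n^{n/p^e} ∈ F, where p^e is the exact power of p dividing n. Equivalently, the primitive p^e-th root of unity ζ_n^{n/p^e} has order 1 over F. -/
theorem stmt3 (F K : Type*) [Field F] [Field K] [Algebra F K] [IsAlgClosure F K]
    (n : ℕ) (hn : 0 < n) (hchar : ¬ (ringChar F ∣ n))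
    (ζ : Kˣ) (hζ : IsPrimitiveRoot ζ n)
    (p : ℕ) (hp : p.Prime) (hpn : p ∣ n)
    (hpo : ¬ p ∣ orderOf (QuotientGroup.mk ζ :
        Kˣ ⧸ (Units.map (algebraMap F K).toMonoidHom).range)) :
    (∃ a : F, algebraMap F K a = (ζ : K) ^ (n / p ^ (n.factorization p))) ∧
    orderOf (QuotientGroup.mk (ζ ^ (n / p ^ (n.factorization p))) :
        Kˣ ⧸ (Units.map (algebraMap F K).toMonoidHom).range) = 1 := by
  set N := (Units.map (algebraMap F K).toMonoidHom).range
  set m := n / p ^ (n.factorization p) with hm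
  set k := orderOf (QuotientGroup.mk ζ : Kˣ ⧸ N) with hk
  have hordζ : orderOf ζ = n := by
    rw [← hζ.eq_orderOf]
  have hkn : k ∣ n := by
    rw [← hordζ]
    exact orderOf_map_dvd (QuotientGroup.mk' N) ζ
  have hcop : Nat.Coprime k (p ^ (n.factorization p)) :=
    (Nat.Prime.coprime_iff_not_dvd hp).mpr hpo |>.symm.pow_right _
  have hkm : k ∣ m := by
    have : k ∣ m * p ^ (n.factorization p) := by
      rwa [hm, Nat.div_mul_cancel (Nat.ordProj_dvd n p)]
    exact (Nat.Coprime.dvd_of_dvd_mul_right hcop this)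
  have h1 : (QuotientGroup.mk (ζ ^ m) : Kˣ ⧸ N) = 1 := by
    have : (QuotientGroup.mk ζ : Kˣ ⧸ N) ^ m = 1 := orderOf_dvd_iff_pow_eq_one.mp hkm
    simpa using this
  have hmem : ζ ^ m ∈ N := (QuotientGroup.eq_one_iff _).mp h1
  obtain ⟨u, hu⟩ := hmem
  constructor
  · refine ⟨u, ?_⟩
    have := congrArg (Units.val) hu
    simpa using this
  · rw [h1, orderOf_one]
end

section
/- Let F be a field, n a positive integer not divisible by char(F), and ζ_n a primitive n-th root of unity with [F(ζ_n):F] = 2 and F(ζ_n)/F separable. Then the minimal polynomial of ζ_n over F has the form x² − (ζ_n + ζ_n^k)x + ζ_n^{k+1} for a unique k ∈ {1, …, n−1} with gcd(k, n) = 1, and moreover o_F(ζ_n) divides k² − 1. -/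
open Polynomial in
theorem stmt13 (F K : Type*) [Field F] [Field K] [Algebra F K] [IsAlgClosure F K]
    (n : ℕ) (hn : 0 < n) (hchar : ¬ (ringChar F ∣ n))
    (ζ : Kˣ) (hζ : IsPrimitiveRoot ζ n)
    (hdeg : Module.finrank F (IntermediateField.adjoin F {((ζ : K))}) = 2)
    (hsep : (minpoly F ((ζ : K))).Separable) :
    ∃! k : ℕ, (1 ≤ k ∧ k ≤ n - 1) ∧ Nat.Coprime k n ∧
      (minpoly F ((ζ : K))).map (algebraMap F K) =
        X ^ 2 - C ((ζ : K) + (ζ : K) ^ k) * X + C ((ζ : K) ^ (k + 1)) ∧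
      orderOf (QuotientGroup.mk ζ :
          Kˣ ⧸ (Units.map (algebraMap F K).toMonoidHom).range) ∣ k ^ 2 - 1 := by
  classical
  have : NeZero n := ⟨hn.ne'⟩
  have hζK : IsPrimitiveRoot ((ζ : K)) n := IsPrimitiveRoot.coe_units_iff.mpr hζ
  have hint : IsIntegral F ((ζ : K)) := Algebra.IsIntegral.isIntegral _
  have hdeg2 : (minpoly F ((ζ : K))).natDegree = 2 := by
    rw [← IntermediateField.adjoin.finrank hint]; exact hdeg
  set p := (minpoly F ((ζ : K))).map (algebraMap F K) with hp
  have hpmonic : p.Monic := (minpoly.monic hint).map _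
  have hpdeg : p.natDegree = 2 := by rw [hp, natDegree_map]; exact hdeg2
  have hproot : IsRoot p ((ζ : K)) := by
    rw [hp, IsRoot, eval_map, ← aeval_def]; exact minpoly.aeval F _
  obtain ⟨q, hq⟩ := dvd_iff_isRoot.mpr hproot
  have hXm : (X - C ((ζ : K))).Monic := monic_X_sub_C _
  have hqmonic : q.Monic := hXm.of_mul_monic_left (hq ▸ hpmonic)
  have hqdeg : q.natDegree = 1 := by
    have := hXm.natDegree_mul hqmonic
    rw [← hq, hpdeg, natDegree_X_sub_C] at this
    omega
  set ζ' : K := -q.coeff 0 with hζ'def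
  have hqeq : q = X - C ζ' := by
    rw [hζ'def, map_neg, sub_neg_eq_add]
    exact hqmonic.eq_X_add_C hqdeg
  have hpfac : p = (X - C ((ζ : K))) * (X - C ζ') := by rw [hq, hqeq]
  have haev : aeval ζ' (minpoly F ((ζ : K))) = 0 := by
    rw [aeval_def, ← eval_map, ← hp, hpfac]
    simp
  -- build the conjugation hom
  have hy : aeval ζ' (minpoly F (IntermediateField.adjoin.powerBasis hint).gen) = 0 := by
    rw [IntermediateField.adjoin.powerBasis_gen, IntermediateField.minpoly_gen]; exact haev
  set pb := IntermediateField.adjoin.powerBasis hint with hpb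
  set σ := pb.lift ζ' hy with hσ
  have hσgen : σ pb.gen = ζ' := pb.lift_gen ζ' hy
  have hgenmap : algebraMap (IntermediateField.adjoin F {((ζ : K))}) K pb.gen = ((ζ : K)) := by
    rw [hpb, IntermediateField.adjoin.powerBasis_gen]
    exact IntermediateField.AdjoinSimple.algebraMap_gen F _
  have hinjA : Function.Injective (algebraMap (IntermediateField.adjoin F {((ζ : K))}) K) :=
    (algebraMap (IntermediateField.adjoin F {((ζ : K))}) K).injective
  have hgen_pow : ∀ l : ℕ, pb.gen ^ l = 1 ↔ ((ζ : K)) ^ l = 1 := by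
    intro l
    constructor
    · intro h
      have := congrArg (algebraMap (IntermediateField.adjoin F {((ζ : K))}) K) h
      simpa [map_pow, hgenmap] using this
    · intro h
      apply hinjA
      simpa [map_pow, hgenmap] using h
  have hζ'prim : IsPrimitiveRoot ζ' n := by
    constructor
    · have : pb.gen ^ n = 1 := (hgen_pow n).mpr hζK.pow_eq_one
      have := congrArg σ this
      simpa [map_pow, hσgen] using this
    · intro l hl
      have hσl : σ (pb.gen ^ l) = σ 1 := by rw [map_pow, hσgen, hl, map_one]
      have hg : pb.gen ^ l = 1 := σ.injective hσl
      exact hζK.dvd_of_pow_eq_one l ((hgen_pow l).mp hg)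
  obtain ⟨k, hkn, hk⟩ := hζK.eq_pow_of_pow_eq_one hζ'prim.pow_eq_one
  have hcop : Nat.Coprime k n := (hζK.pow_iff_coprime hn k).mp (hk ▸ hζ'prim)
  have hk1 : 1 ≤ k := by
    rcases Nat.eq_zero_or_pos k with rfl | h
    · exfalso
      have hn1 : n = 1 := Nat.coprime_zero_left n |>.mp hcop
      have hζ1 : ((ζ : K)) = 1 := by simpa [hn1] using hζK.pow_eq_one
      rw [hζ1, minpoly.one, ← C_1, natDegree_X_sub_C] at hdeg2
      omega
    · exact h
  have hpoly : p = X ^ 2 - C ((ζ : K) + (ζ : K) ^ k) * X + C ((ζ : K) ^ (k + 1)) := by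
    rw [hpfac, ← hk, C_add, show ((ζ : K)) ^ (k + 1) = (ζ : K) * (ζ : K) ^ k by ring, C_mul]
    ring
  -- order part
  have hc0 : algebraMap F K ((minpoly F ((ζ : K))).coeff 0) = ((ζ : K)) ^ (k + 1) := by
    have h0 := congrArg (fun r => Polynomial.coeff r 0) hpoly
    simp only [hp, coeff_map, coeff_add, coeff_sub, coeff_X_pow, coeff_C_mul, coeff_X_zero,
      coeff_C] at h0
    simpa using h0
  have hne : ((minpoly F ((ζ : K))).coeff 0) ≠ 0 := by
    intro h
    rw [h, map_zero] at hc0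
    exact pow_ne_zero (k + 1) (Units.ne_zero ζ) hc0.symm
  have hmem : (ζ ^ (k + 1) : Kˣ) ∈ (Units.map (algebraMap F K).toMonoidHom).range := by
    refine ⟨Units.mk0 _ hne, ?_⟩
    ext
    simpa using hc0
  have hord : orderOf (QuotientGroup.mk ζ :
      Kˣ ⧸ (Units.map (algebraMap F K).toMonoidHom).range) ∣ (k + 1) := by
    apply orderOf_dvd_of_pow_eq_one
    rw [← QuotientGroup.mk_pow]
    exact (QuotientGroup.eq_one_iff _).mpr hmem
  have hordsq : orderOf (QuotientGroup.mk ζ :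
      Kˣ ⧸ (Units.map (algebraMap F K).toMonoidHom).range) ∣ k ^ 2 - 1 := by
    obtain ⟨m, rfl⟩ := Nat.exists_eq_add_of_le hk1
    have h2 : (1 + m) ^ 2 - 1 = (1 + m + 1) * m := by
      have : (1 + m) ^ 2 = (1 + m + 1) * m + 1 := by ring
      omega
    rw [h2]
    exact Dvd.dvd.mul_right hord m
  refine ⟨k, ⟨⟨hk1, by omega⟩, hcop, hpoly, hordsq⟩, ?_⟩
  rintro k' ⟨⟨hk'1, hk'n⟩, hcop', hpoly', -⟩
  have hcoeff : ((ζ : K)) + ((ζ : K)) ^ k' = ((ζ : K)) + ((ζ : K)) ^ k := by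
    have heq : (X ^ 2 - C ((ζ : K) + (ζ : K) ^ k') * X + C ((ζ : K) ^ (k' + 1)) : K[X]) =
        X ^ 2 - C ((ζ : K) + (ζ : K) ^ k) * X + C ((ζ : K) ^ (k + 1)) := by
      rw [← hpoly', hpoly]
    have h1 := congrArg (fun r => Polynomial.coeff r 1) heq
    simp only [coeff_add, coeff_sub, coeff_X_pow, coeff_C_mul, coeff_X_one, coeff_C] at h1
    simpa using h1
  have hpow : ((ζ : K)) ^ k' = ((ζ : K)) ^ k := by
    have := add_left_cancel hcoeff
    exact this
  exact hζK.pow_inj (by omega) hkn hpow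
end

section
/- Let F be a field with char(F) ≠ 2, n a positive integer not divisible by char(F), ζ_n a primitive n-th root of unity with [F(ζ_n):F] = 2, and k the unique integer with ζ_n + ζ_n^k ∈ F and ζ_n^{k+1} ∈ F coming from the minimal polynomial. Then ζ_n − ζ_n^k generates F(ζ_n) over F and its minimal polynomial is the radical polynomial x² − (ζ_n² + ζ_n^{2k} − 2ζ_n^{k+1}). -/
open Polynomial in
theorem stmt15 (F K : Type*) [Field F] [Field K] [Algebra F K] [IsAlgClosure F K]
    (hchar2 : ringChar F ≠ 2)
    (n : ℕ) (hn : 0 < n) (hchar : ¬ (ringChar F ∣ n))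
    (ζ : K) (hζ : IsPrimitiveRoot ζ n)
    (hdeg : Module.finrank F (IntermediateField.adjoin F {ζ}) = 2)
    (k : ℕ) (hk : Nat.Coprime k n)
    (hk1 : ∃ a : F, algebraMap F K a = ζ + ζ ^ k)
    (hk2 : ∃ a : F, algebraMap F K a = ζ ^ (k + 1)) :
    IntermediateField.adjoin F {ζ - ζ ^ k} = IntermediateField.adjoin F {ζ} ∧
    (minpoly F (ζ - ζ ^ k)).map (algebraMap F K) =
      X ^ 2 - C (ζ ^ 2 + ζ ^ (2 * k) - 2 * ζ ^ (k + 1)) := by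
  obtain ⟨a, ha⟩ := hk1
  obtain ⟨b, hb⟩ := hk2
  set β : K := ζ - ζ ^ k with hβ
  -- β² = (ζ+ζ^k)² - 4 ζ^{k+1}
  have hsq : β ^ 2 = algebraMap F K (a ^ 2 - 4 * b) := by
    have : β ^ 2 = (ζ + ζ ^ k) ^ 2 - 4 * ζ ^ (k + 1) := by
      rw [hβ]; ring
    rw [this, ← ha, ← hb]; push_cast [map_sub, map_mul, map_pow, map_ofNat]; ring
  set p : F[X] := X ^ 2 - C (a ^ 2 - 4 * b) with hp
  have hpmonic : p.Monic := by
    apply Polynomial.monic_X_pow_sub_C _ (by norm_num)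
  have hproot : Polynomial.aeval β p = 0 := by
    simp [hp, hsq]
  have hint : IsIntegral F β := ⟨p, hpmonic, by simpa [Polynomial.aeval_def] using hproot⟩
  have hpdeg : p.natDegree = 2 := by
    rw [hp]; compute_degree!
  have h2F : (2 : F) ≠ 0 := by
    intro h
    have hdvd : ringChar F ∣ 2 := by
      have := ringChar.charP F
      exact (CharP.cast_eq_zero_iff F (ringChar F) 2).mp (by exact_mod_cast h)
    have hub : ringChar F ≤ 2 := Nat.le_of_dvd (by norm_num) hdvd
    interval_cases h : ringChar F
    · simp at hdvd
    · exact CharP.ringChar_ne_one h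
    · exact hchar2 rfl
  -- β ∉ F
  have hβnot : β ∉ (algebraMap F K).range := by
    rintro ⟨c, hc⟩
    have hζF : ζ = algebraMap F K ((a + c) / 2) := by
      have h2K : (2 : K) ≠ 0 := by
        intro h
        apply h2F
        apply (algebraMap F K).injective
        rw [map_ofNat, h, map_zero]
      have : algebraMap F K (a + c) = 2 * ζ := by
        rw [map_add, ha, hc, hβ]; ring
      rw [map_div₀, this, map_ofNat]
      field_simp
    have : IntermediateField.adjoin F {ζ} = ⊥ := by
      rw [eq_bot_iff]
      rw [IntermediateField.adjoin_le_iff]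
      intro x hx
      rw [Set.mem_singleton_iff] at hx
      subst hx
      show _ ∈ (⊥ : IntermediateField F K)
      rw [IntermediateField.mem_bot]
      exact ⟨_, hζF.symm⟩
    rw [this, IntermediateField.finrank_bot] at hdeg
    norm_num at hdeg
  have hdvd : minpoly F β ∣ p := minpoly.dvd F β (by simpa [Polynomial.aeval_def] using hproot)
  have hmindeg : (minpoly F β).natDegree = 2 := by
    have hle : (minpoly F β).natDegree ≤ 2 := by
      have := Polynomial.natDegree_le_of_dvd hdvd hpmonic.ne_zero
      omega
    have hge : 2 ≤ (minpoly F β).natDegree :=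
      (minpoly.two_le_natDegree_iff hint).mpr hβnot
    omega
  have hminp : minpoly F β = p := by
    apply Polynomial.eq_of_monic_of_associated (minpoly.monic hint) hpmonic
    exact Polynomial.associated_of_dvd_of_natDegree_le hdvd hpmonic.ne_zero (by omega)
  constructor
  · -- F(β) = F(ζ)
    have hle : IntermediateField.adjoin F {β} ≤ IntermediateField.adjoin F {ζ} := by
      rw [IntermediateField.adjoin_le_iff]
      intro x hx
      rw [Set.mem_singleton_iff] at hx
      subst hx
      have hζmem : ζ ∈ IntermediateField.adjoin F {ζ} :=
        IntermediateField.mem_adjoin_simple_self F ζ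
      exact sub_mem hζmem (pow_mem hζmem k)
    have hfd : FiniteDimensional F (IntermediateField.adjoin F {ζ}) := by
      apply FiniteDimensional.of_finrank_pos
      omega
    apply IntermediateField.eq_of_le_of_finrank_eq hle
    rw [IntermediateField.adjoin.finrank hint, hmindeg, hdeg]
  · rw [hminp, hp]
    rw [Polynomial.map_sub, Polynomial.map_pow, Polynomial.map_X, Polynomial.map_C]
    congr 1
    rw [← hsq, hβ, mul_comm 2 k, pow_mul, pow_succ]
    ring
end

section
/- Let F be a field, p an odd prime not equal to char(F), e ≥ 1, and ζ a primitive p^e-th root of unity with [F(ζ):F] = 2. Then no nontrivial p-power root of unity lies in F (i.e., n_F = 1), and the order of ζ in F̄ˣ/Fˣ equals p^e. -/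
open IntermediateField Module

lemma aux_zmod {p e : ℕ} (hp : p.Prime) (hodd : p ≠ 2) (he : 1 ≤ e)
    {x : ZMod (p ^ e)} (hx : x * x = 1) (hx1 : x ≠ 1) : x = -1 := by
  haveI : NeZero (p ^ e) := ⟨pow_ne_zero e hp.ne_zero⟩
  set a : ℤ := (x.val : ℤ) with ha
  have hax : ((a : ℤ) : ZMod (p ^ e)) = x := by
    simp [ha, ZMod.natCast_val, ZMod.cast_id]
  have hdvd : ((p : ℤ) ^ e) ∣ (a - 1) * (a + 1) := by
    have h0 : (((a - 1) * (a + 1) : ℤ) : ZMod (p ^ e)) = 0 := by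
      push_cast [hax]
      ring_nf
      rw [← hx]; ring
    rw [ZMod.intCast_zmod_eq_zero_iff_dvd] at h0
    exact_mod_cast h0
  have hpz : Prime (p : ℤ) := Nat.prime_iff_prime_int.mp hp
  by_cases h1 : (p : ℤ) ∣ (a + 1)
  · have h2 : ¬ (p : ℤ) ∣ (a - 1) := by
      intro h2
      have hd2 : (p : ℤ) ∣ 2 := by
        have := dvd_sub h1 h2
        simpa using this
      have hd2' : p ∣ 2 := by exact_mod_cast hd2
      exact hodd ((Nat.prime_dvd_prime_iff_eq hp Nat.prime_two).mp hd2')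
    have hcop : IsCoprime ((p : ℤ) ^ e) (a - 1) :=
      ((hpz.coprime_iff_not_dvd).mpr h2).pow_left
    have hdvd' : ((p : ℤ) ^ e) ∣ (a + 1) := hcop.dvd_of_dvd_mul_left hdvd
    have h0 : ((a + 1 : ℤ) : ZMod (p ^ e)) = 0 := by
      rw [ZMod.intCast_zmod_eq_zero_iff_dvd]
      exact_mod_cast hdvd'
    push_cast [hax] at h0
    linear_combination h0
  · have hcop : IsCoprime ((p : ℤ) ^ e) (a + 1) :=
      ((hpz.coprime_iff_not_dvd).mpr h1).pow_left
    have hdvd' : ((p : ℤ) ^ e) ∣ (a - 1) := hcop.dvd_of_dvd_mul_right hdvd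
    have h0 : ((a - 1 : ℤ) : ZMod (p ^ e)) = 0 := by
      rw [ZMod.intCast_zmod_eq_zero_iff_dvd]
      exact_mod_cast hdvd'
    push_cast [hax] at h0
    exact absurd (by linear_combination h0) hx1

lemma aux_key (F K : Type*) [Field F] [Field K] [Algebra F K]
    (p : ℕ) (hp : p.Prime) (hodd : p ≠ 2)
    (e : ℕ) (he : 1 ≤ e) (ζ : Kˣ) (hζ : IsPrimitiveRoot ζ (p ^ e))
    (hdeg : Module.finrank F (IntermediateField.adjoin F {((ζ : K))}) = 2) :
    ∀ η : K, η ∈ (algebraMap F K).range → ¬ IsPrimitiveRoot η p := by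
  intro η hη hηK
  haveI : NeZero (p ^ e) := ⟨pow_ne_zero e hp.ne_zero⟩
  haveI : NeZero p := ⟨hp.ne_zero⟩
  set pn : ℕ+ := ⟨p ^ e, Nat.pos_of_ne_zero (pow_ne_zero e hp.ne_zero)⟩ with hpn
  have hζK : IsPrimitiveRoot ((ζ : K)) ((pn : ℕ)) := IsPrimitiveRoot.coe_units_iff.mpr hζ
  set L := IntermediateField.adjoin F {((ζ : K))} with hL
  have hmem : (ζ : K) ∈ L := IntermediateField.mem_adjoin_simple_self F _
  set ζL : L := ⟨(ζ : K), hmem⟩ with hζLdef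
  have hζL : IsPrimitiveRoot ζL ((pn : ℕ)) := by
    have : IsPrimitiveRoot ((ζL : K)) ((pn : ℕ)) := hζK
    exact IsPrimitiveRoot.coe_submonoidClass_iff.mp this
  have hint : IsIntegral F ((ζ : K)) := by
    refine ⟨Polynomial.X ^ (p ^ e) - 1, Polynomial.monic_X_pow_sub_C 1 (pow_ne_zero e hp.ne_zero), ?_⟩
    have hone : ((ζ : K)) ^ (p ^ e) = 1 := by rw [← Units.val_pow_eq_pow_val, hζ.pow_eq_one, Units.val_one]
    simp [hone, sub_eq_zero]
  have hsub : L.toSubalgebra = Algebra.adjoin F {((ζ : K))} :=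
    IntermediateField.adjoin_simple_toSubalgebra_of_isAlgebraic hint.isAlgebraic
  haveI : IsCyclotomicExtension {(pn : ℕ)} F ↥(Algebra.adjoin F {((ζ : K))}) :=
    hζK.adjoin_isCyclotomicExtension F
  haveI : IsCyclotomicExtension {(pn : ℕ)} F L :=
    IsCyclotomicExtension.equiv {(pn : ℕ)} F _ (Subalgebra.equivOfEq _ _ hsub.symm)
  haveI : FiniteDimensional F L := FiniteDimensional.of_finrank_eq_succ (n := 1) hdeg
  haveI : IsGalois F L := IsCyclotomicExtension.isGalois {(pn : ℕ)} F L
  have hcard : Fintype.card (L ≃ₐ[F] L) = 2 := by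
    rw [← Nat.card_eq_fintype_card, IsGalois.card_aut_eq_finrank]; exact hdeg
  obtain ⟨σ, hσ⟩ := Fintype.exists_ne_of_one_lt_card (by rw [hcard]; norm_num) (1 : L ≃ₐ[F] L)
  set a : (ZMod ((pn : ℕ)))ˣ := hζL.autToPow F σ with haa
  have hspec : ζL ^ ((a : ZMod ((pn : ℕ)))).val = σ ζL := hζL.autToPow_spec F σ
  have ha1 : a ≠ 1 := by
    intro h
    apply hσ
    apply hζL.autToPow_injective F
    rw [← haa, h, map_one]
  have hσ2 : σ ^ 2 = 1 := by
    have := pow_card_eq_one (G := L ≃ₐ[F] L) (x := σ)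
    rwa [hcard] at this
  have ha2 : a * a = 1 := by
    have : a ^ 2 = 1 := by rw [haa, ← map_pow, hσ2, map_one]
    rwa [sq] at this
  set b : ZMod ((pn : ℕ)) := (a : ZMod ((pn : ℕ))) with hb
  have hbb : b * b = 1 := by rw [hb, ← Units.val_mul, ha2, Units.val_one]
  have hbne : b ≠ 1 := by
    intro h
    exact ha1 (Units.ext (by rw [← hb, h, Units.val_one]))
  have hbneg : b = -1 := aux_zmod hp hodd he hbb hbne
  -- p^e divides b.val + 1
  have hdvdval : p ∣ b.val + 1 := by
    have h0 : ((b.val + 1 : ℕ) : ZMod (p ^ e)) = 0 := by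
      push_cast
      rw [ZMod.natCast_val, show (ZMod.cast b : ZMod (p ^ e)) = b from ZMod.cast_id _ b, hbneg]
      exact neg_add_cancel _
    rw [ZMod.natCast_eq_zero_iff] at h0
    exact dvd_trans (dvd_pow_self p (by omega)) h0
  -- η is a power of ζ
  obtain ⟨x, hx⟩ := hη
  have hprod : p ^ e = p ^ (e - 1) * p := by
    rw [← pow_succ, Nat.sub_add_cancel he]
  have hζp : IsPrimitiveRoot ((ζ : K) ^ (p ^ (e - 1))) p :=
    hζK.pow (Nat.pos_of_ne_zero (pow_ne_zero e hp.ne_zero)) hprod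
  obtain ⟨j, _, hjeq⟩ := hζp.eq_pow_of_pow_eq_one hηK.pow_eq_one
  set m : ℕ := p ^ (e - 1) * j with hm
  have hηeq : (ζ : K) ^ m = η := by rw [hm, pow_mul]; exact hjeq
  set ηL : L := ζL ^ m with hηLdef
  have hηLcoe : ((ηL : K)) = η := by
    rw [hηLdef]
    push_cast
    exact hηeq
  have hηLp : IsPrimitiveRoot ηL p := by
    apply IsPrimitiveRoot.coe_submonoidClass_iff.mp
    rw [hηLcoe]; exact hηK
  -- σ fixes ηL since ηL comes from F
  have hrange : algebraMap F L x = ηL := by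
    apply Subtype.ext
    rw [← hηLcoe] at hx
    exact (IsScalarTower.algebraMap_apply F L K x).symm.trans hx
  have hfix : σ ηL = ηL := by rw [← hrange]; exact σ.commutes x
  have hpow : σ ηL = ηL ^ b.val := by
    rw [hηLdef, map_pow, ← hspec, ← pow_mul, mul_comm, pow_mul]
  have heq : ηL ^ b.val = ηL := by rw [← hpow, hfix]
  have h2 : ηL ^ 2 = 1 := by
    have h3 : ηL ^ (b.val + 1) = ηL ^ 2 := by
      rw [pow_succ, heq, sq]
    have h4 : ηL ^ (b.val + 1) = 1 := by
      obtain ⟨c, hc⟩ := hdvdval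
      rw [hc, pow_mul, hηLp.pow_eq_one, one_pow]
    rw [← h3, h4]
  have hpd : p ∣ 2 := hηLp.dvd_of_pow_eq_one 2 h2
  exact hodd ((Nat.prime_dvd_prime_iff_eq hp Nat.prime_two).mp hpd)

theorem stmt16 (F K : Type*) [Field F] [Field K] [Algebra F K] [IsAlgClosure F K]
    (p : ℕ) (hp : p.Prime) (hodd : p ≠ 2) (hpchar : ringChar F ≠ p)
    (e : ℕ) (he : 1 ≤ e) (ζ : Kˣ) (hζ : IsPrimitiveRoot ζ (p ^ e))
    (hdeg : Module.finrank F (IntermediateField.adjoin F {((ζ : K))}) = 2) :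
    (∀ m : ℕ, m ∣ p ^ e → (∃ x : F, IsPrimitiveRoot x m) → m = 1) ∧
    orderOf (QuotientGroup.mk ζ :
        Kˣ ⧸ (Units.map (algebraMap F K).toMonoidHom).range) = p ^ e := by
  have key := aux_key F K p hp hodd e he ζ hζ hdeg
  constructor
  · rintro m hm ⟨x, hx⟩
    obtain ⟨f, hfe, rfl⟩ := (Nat.dvd_prime_pow hp).mp hm
    rcases Nat.eq_zero_or_pos f with rfl | hf
    · exact pow_zero p
    · exfalso
      have hy : IsPrimitiveRoot (x ^ (p ^ (f - 1))) p :=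
        hx.pow (Nat.pos_of_ne_zero (pow_ne_zero f hp.ne_zero))
          (by rw [← pow_succ, Nat.sub_add_cancel hf])
      have hη : IsPrimitiveRoot (algebraMap F K (x ^ (p ^ (f - 1)))) p :=
        hy.map_of_injective (algebraMap F K).injective
      exact key _ ⟨_, rfl⟩ hη
  · set N := (Units.map (algebraMap F K).toMonoidHom).range with hN
    have h1 : (QuotientGroup.mk ζ : Kˣ ⧸ N) ^ (p ^ e) = 1 := by
      rw [← QuotientGroup.mk_pow, hζ.pow_eq_one, QuotientGroup.mk_one]
    have hdvd : orderOf (QuotientGroup.mk ζ : Kˣ ⧸ N) ∣ p ^ e :=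
      orderOf_dvd_of_pow_eq_one h1
    obtain ⟨f, hfe, hford⟩ := (Nat.dvd_prime_pow hp).mp hdvd
    rcases eq_or_lt_of_le hfe with rfl | hflt
    · exact hford
    · exfalso
      have h2 : (QuotientGroup.mk ζ : Kˣ ⧸ N) ^ (p ^ f) = 1 := by
        rw [← hford]; exact pow_orderOf_eq_one _
      have h3 : ζ ^ (p ^ f) ∈ N := by
        rw [← QuotientGroup.eq_one_iff, QuotientGroup.mk_pow]
        exact h2
      have h4 : ζ ^ (p ^ (e - 1)) ∈ N := by
        have : (ζ ^ (p ^ f)) ^ (p ^ (e - 1 - f)) ∈ N := pow_mem h3 _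
        rwa [← pow_mul, ← pow_add, Nat.add_sub_cancel' (by omega : f ≤ e - 1)] at this
      obtain ⟨u, hu⟩ := h4
      have h5 : algebraMap F K (u : F) = ((ζ : K)) ^ (p ^ (e - 1)) := by
        have := congrArg Units.val hu
        simpa using this
      have hζp : IsPrimitiveRoot (((ζ : K)) ^ (p ^ (e - 1))) p :=
        (IsPrimitiveRoot.coe_units_iff.mpr hζ).pow
          (Nat.pos_of_ne_zero (pow_ne_zero e hp.ne_zero))
          (by rw [← pow_succ, Nat.sub_add_cancel he])
      exact key _ ⟨_, h5⟩ hζp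
end

section
/- Let F be a field, p an odd prime not equal to char(F), and n a positive integer with [F(ζ_n):F] = 2, p | n, and p | o_F(ζ_n). Write p^E for the exact power of p dividing n. Then: (1) F(ζ_n) = F(ζ_{p^t}) for all 1 ≤ t ≤ E, where ζ_{p^t} = ζ_n^{n/p^t}; (2) p^E exactly divides o_F(ζ_n) and o_F(ζ_{p^t}) = p^t for all 1 ≤ t ≤ E; (3) the minimal polynomial of ζ_{p^t} over F is x² − (ζ_{p^t} + ζ_{p^t}^{−1})x + 1 for all 1 ≤ t ≤ E. -/
open Polynomial in
theorem stmt17 (F K : Type*) [Field F] [Field K] [Algebra F K] [IsAlgClosure F K]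
    (p : ℕ) (hp : p.Prime) (hodd : p ≠ 2) (hpchar : ringChar F ≠ p)
    (n : ℕ) (hn : 0 < n) (hchar : ¬ (ringChar F ∣ n))
    (ζ : Kˣ) (hζ : IsPrimitiveRoot ζ n)
    (hdeg : Module.finrank F (IntermediateField.adjoin F {((ζ : K))}) = 2)
    (hpn : p ∣ n)
    (hpo : p ∣ orderOf (QuotientGroup.mk ζ :
        Kˣ ⧸ (Units.map (algebraMap F K).toMonoidHom).range)) :
    (∀ t : ℕ, 1 ≤ t → t ≤ n.factorization p →
      IntermediateField.adjoin F {((ζ : K))} =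
        IntermediateField.adjoin F {(((ζ ^ (n / p ^ t) : Kˣ)) : K)}) ∧
    (p ^ (n.factorization p) ∣ orderOf (QuotientGroup.mk ζ :
        Kˣ ⧸ (Units.map (algebraMap F K).toMonoidHom).range) ∧
     ¬ p ^ (n.factorization p + 1) ∣ orderOf (QuotientGroup.mk ζ :
        Kˣ ⧸ (Units.map (algebraMap F K).toMonoidHom).range)) ∧
    (∀ t : ℕ, 1 ≤ t → t ≤ n.factorization p →
      orderOf (QuotientGroup.mk (ζ ^ (n / p ^ t)) :
        Kˣ ⧸ (Units.map (algebraMap F K).toMonoidHom).range) = p ^ t) ∧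
    (∀ t : ℕ, 1 ≤ t → t ≤ n.factorization p →
      (minpoly F (((ζ ^ (n / p ^ t) : Kˣ)) : K)).map (algebraMap F K) =
        X ^ 2 - C ((((ζ ^ (n / p ^ t) : Kˣ)) : K) + (((ζ ^ (n / p ^ t) : Kˣ)⁻¹) : K)) * X
          + 1) := by
  classical
  haveI : NeZero n := ⟨hn.ne'⟩
  haveI : IsAlgClosed K := IsAlgClosure.isAlgClosed F
  have hζK : IsPrimitiveRoot ((ζ : K)) n := IsPrimitiveRoot.coe_units_iff.mpr hζ
  have hζn1 : (ζ : K) ^ n = 1 := hζK.pow_eq_one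
  have hnF : (n : F) ≠ 0 := fun h =>
    hchar ((CharP.cast_eq_zero_iff F (ringChar F) n).mp h)
  have hroot : (Polynomial.aeval (ζ : K)) ((X : F[X]) ^ n - C 1) = 0 := by
    simp [hζn1]
  have hint : IsIntegral F ((ζ : K)) :=
    ⟨(X : F[X]) ^ n - C 1, monic_X_pow_sub_C 1 hn.ne', by simpa using hroot⟩
  have hmono := minpoly.monic hint
  have hdvd : minpoly F ((ζ : K)) ∣ (X : F[X]) ^ n - C 1 := minpoly.dvd F _ hroot
  have hsep : (minpoly F ((ζ : K))).Separable :=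
    (separable_X_pow_sub_C (1 : F) hnF one_ne_zero).of_dvd hdvd
  have hdeg2 : (minpoly F ((ζ : K))).natDegree = 2 := by
    rw [← IntermediateField.adjoin.finrank hint]; exact hdeg
  -- The mapped minimal polynomial P
  set P : K[X] := (minpoly F ((ζ : K))).map (algebraMap F K) with hP
  have hPmonic : P.Monic := hmono.map _
  have hPdeg : P.natDegree = 2 := by
    rw [hP, natDegree_map]; exact hdeg2
  have hPsplits : P.Splits := IsAlgClosed.splits _
  have hProots : P.roots.card = 2 := by
    rw [(splits_iff_card_roots).mp hPsplits, hPdeg]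
  have hζroot : (ζ : K) ∈ P.roots := by
    rw [mem_roots hPmonic.ne_zero]
    simpa [hP, IsRoot, eval_map, ← aeval_def] using minpoly.aeval F ((ζ : K))
  -- second root η
  obtain ⟨η, hη⟩ : ∃ η, P.roots.erase (ζ : K) = {η} := by
    apply Multiset.card_eq_one.mp
    rw [Multiset.card_erase_of_mem hζroot, hProots]; rfl
  have hMroots : P.roots = (ζ : K) ::ₘ {η} := by
    rw [← hη, Multiset.cons_erase hζroot]
  have hPfact : P = (X - C ((ζ : K))) * (X - C η) := by
    have h := hPsplits.eq_prod_roots_of_monic hPmonic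
    rw [hMroots] at h
    simpa using h
  have hηroot : IsRoot P η := by
    rw [hPfact]; simp
  have hne : η ≠ (ζ : K) := by
    intro h
    have hsf : Squarefree P := (hsep.map (f := algebraMap F K)).squarefree
    have := hsf (X - C ((ζ : K))) (by rw [hPfact, h])
    exact Polynomial.not_isUnit_X_sub_C _ this
  -- η is an n-th root of unity, hence a power of ζ
  have hηn : η ^ n = 1 := by
    have h2 : P ∣ (X : K[X]) ^ n - C 1 := by
      have := Polynomial.map_dvd (algebraMap F K) hdvd
      simpa [hP, Polynomial.map_pow] using this
    have h3 := eval_eq_zero_of_dvd_of_eval_eq_zero h2 hηroot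
    rw [eval_sub, eval_pow, eval_X, eval_C] at h3
    exact sub_eq_zero.mp h3
  obtain ⟨j0, hj0lt, hj0⟩ := hζK.eq_pow_of_pow_eq_one hηn
  set j : ℕ := j0 + n with hjdef
  have hj1 : 1 ≤ j := le_add_of_le_right hn
  have hj : (ζ : K) ^ j = η := by
    rw [hjdef, pow_add, hζn1, mul_one, hj0]
  -- membership in the quotient kernel
  have hmem : ∀ x : Kˣ, ((QuotientGroup.mk x :
      Kˣ ⧸ (Units.map (algebraMap F K).toMonoidHom).range) = 1) ↔
      ∃ c : F, algebraMap F K c = (x : K) := by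
    intro x
    rw [QuotientGroup.eq_one_iff]
    constructor
    · rintro ⟨u, hu⟩
      exact ⟨(u : F), by rw [← hu]; rfl⟩
    · rintro ⟨c, hc⟩
      have hc0 : c ≠ 0 := by
        rintro rfl
        simp at hc
        exact x.ne_zero hc.symm
      refine ⟨Units.mk0 c hc0, Units.ext ?_⟩
      simpa using hc
  -- the conjugation embedding φ
  set pb := IntermediateField.adjoin.powerBasis hint with hpb
  have hηmin : (Polynomial.aeval η) (minpoly F pb.gen) = 0 := by
    have : minpoly F pb.gen = minpoly F ((ζ : K)) := by
      rw [hpb]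
      exact IntermediateField.minpoly_gen F ((ζ : K))
    rw [this, aeval_def, ← eval_map, ← hP]
    exact hηroot
  set φ := pb.lift η hηmin with hφ
  have hφgen : φ pb.gen = η := pb.lift_gen η hηmin
  have hgenval : ((pb.gen : IntermediateField.adjoin F {((ζ : K))}) : K) = (ζ : K) :=
    IntermediateField.AdjoinSimple.coe_gen F ((ζ : K))
  -- if ζ^k is in F then φ fixes it, so η^k = ζ^k
  have hfix : ∀ k : ℕ, (∃ c : F, algebraMap F K c = (ζ : K) ^ k) →
      η ^ k = (ζ : K) ^ k := by
    rintro k ⟨c, hc⟩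
    have hgenk : pb.gen ^ k = algebraMap F (IntermediateField.adjoin F {((ζ : K))}) c := by
      apply Subtype.ext
      push_cast
      rw [hgenval, ← hc]
    have h2 := congrArg φ hgenk
    rw [map_pow, hφgen, AlgHom.commutes] at h2
    rw [h2, hc]
  -- core divisibility: if ζ^m ∈ F then n ∣ m * (j - 1)
  have hcore : ∀ m : ℕ, ((QuotientGroup.mk (ζ ^ m) :
      Kˣ ⧸ (Units.map (algebraMap F K).toMonoidHom).range) = 1) → n ∣ m * (j - 1) := by
    intro m hm
    have hm' : ∃ c : F, algebraMap F K c = (ζ : K) ^ m := by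
      obtain ⟨c, hc⟩ := (hmem _).mp hm
      exact ⟨c, by rw [hc]; exact (Units.val_pow_eq_pow_val ζ m)⟩
    have h1 : η ^ m = (ζ : K) ^ m := hfix m hm'
    rw [← hj, ← pow_mul] at h1
    have h2 : (ζ : K) ^ (m * (j - 1)) * (ζ : K) ^ m = (ζ : K) ^ (j * m) := by
      rw [← pow_add]
      congr 1
      obtain ⟨j', hj'⟩ := Nat.exists_eq_add_of_le hj1
      rw [hj']
      simp [Nat.add_sub_cancel_left]
      ring
    rw [h1] at h2
    have hne0 : (ζ : K) ^ m ≠ 0 := pow_ne_zero _ (Units.ne_zero ζ)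
    have h3 : (ζ : K) ^ (m * (j - 1)) = 1 :=
      mul_right_cancel₀ hne0 (h2.trans (one_mul _).symm)
    exact (hζK.pow_eq_one_iff_dvd _).mp h3
  -- order of the class of ζ
  set G := Kˣ ⧸ (Units.map (algebraMap F K).toMonoidHom).range with hG
  set o : ℕ := orderOf (QuotientGroup.mk ζ : G) with ho
  have hon : o ∣ n := by
    apply orderOf_dvd_of_pow_eq_one
    rw [← QuotientGroup.mk_pow, hζ.pow_eq_one, QuotientGroup.mk_one]
  have hone : o ≠ 0 := by
    intro h
    rw [h] at hon
    exact hn.ne' (Nat.eq_zero_of_zero_dvd hon)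
  -- ζ^(1+j) ∈ F (norm)
  have hnorm : (QuotientGroup.mk (ζ ^ (1 + j)) : G) = 1 := by
    rw [hmem]
    refine ⟨(minpoly F ((ζ : K))).coeff 0, ?_⟩
    have h1 : P.coeff 0 = algebraMap F K ((minpoly F ((ζ : K))).coeff 0) := by
      rw [hP, coeff_map]
    have h2 : P.coeff 0 = (ζ : K) * η := by
      rw [hPfact]
      simp [coeff_zero_eq_eval_zero]
    have h4 : ((ζ ^ (1 + j) : Kˣ) : K) = (ζ : K) * η := by
      rw [Units.val_pow_eq_pow_val, pow_add, pow_one, hj]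
    rw [h4, ← h2, h1]
  have hoj : o ∣ 1 + j := by
    apply orderOf_dvd_of_pow_eq_one
    rw [← QuotientGroup.mk_pow]
    exact hnorm
  have hpj : p ∣ 1 + j := dvd_trans hpo hoj
  have hpj1 : ¬ p ∣ (j - 1) := by
    intro h
    have h2 : p ∣ 2 := by
      have := Nat.dvd_sub hpj h
      have heq : (1 + j) - (j - 1) = 2 := by omega
      rwa [heq] at this
    exact hodd ((Nat.prime_dvd_prime_iff_eq hp Nat.prime_two).mp h2)
  set E : ℕ := n.factorization p with hE
  have hpEn : p ^ E ∣ n := Nat.ordProj_dvd n p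
  have hcop : Nat.Coprime (p ^ E) (j - 1) :=
    Nat.Coprime.pow_left E ((Nat.Prime.coprime_iff_not_dvd hp).mpr hpj1)
  have hpEo : p ^ E ∣ o := by
    have h1 : n ∣ o * (j - 1) := hcore o (by
      rw [QuotientGroup.mk_pow]
      exact pow_orderOf_eq_one _)
    exact hcop.dvd_of_dvd_mul_right (dvd_trans hpEn h1)
  have hpE1 : ¬ p ^ (E + 1) ∣ o := by
    intro h
    have h2 : p ^ (E + 1) ∣ n := h.trans hon
    have h3 := (Nat.Prime.pow_dvd_iff_le_factorization hp hn.ne').mp h2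
    omega
  -- main statement for each t
  have main : ∀ t : ℕ, 1 ≤ t → t ≤ E →
      (IntermediateField.adjoin F {((ζ : K))} =
        IntermediateField.adjoin F {(((ζ ^ (n / p ^ t) : Kˣ)) : K)}) ∧
      (orderOf (QuotientGroup.mk (ζ ^ (n / p ^ t)) : G) = p ^ t) ∧
      ((minpoly F (((ζ ^ (n / p ^ t) : Kˣ)) : K)).map (algebraMap F K) =
        X ^ 2 - C ((((ζ ^ (n / p ^ t) : Kˣ)) : K) + (((ζ ^ (n / p ^ t) : Kˣ)⁻¹) : K)) * X
          + 1) := by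
    intro t ht1 htE
    have hptE : p ^ t ∣ p ^ E := pow_dvd_pow p htE
    have hptn : p ^ t ∣ n := hptE.trans hpEn
    set m : ℕ := n / p ^ t with hmdef
    have hmn : m * p ^ t = n := Nat.div_mul_cancel hptn
    have hmpos : 0 < m := Nat.div_pos (Nat.le_of_dvd hn hptn) (pow_pos hp.pos t)
    have hptj : p ^ t ∣ 1 + j := hptE.trans (hpEo.trans hoj)
    have hvm : (((ζ ^ m : Kˣ)) : K) = (ζ : K) ^ m := Units.val_pow_eq_pow_val ζ m
    have hcopt : Nat.Coprime (p ^ t) (j - 1) :=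
      Nat.Coprime.pow_left t ((Nat.Prime.coprime_iff_not_dvd hp).mpr hpj1)
    -- order of the class of ζ^m is p^t
    have hordt : orderOf (QuotientGroup.mk (ζ ^ m) : G) = p ^ t := by
      apply Nat.dvd_antisymm
      · apply orderOf_dvd_of_pow_eq_one
        rw [← QuotientGroup.mk_pow, ← pow_mul, hmn, hζ.pow_eq_one, QuotientGroup.mk_one]
      · set k : ℕ := orderOf (QuotientGroup.mk (ζ ^ m) : G) with hk
        have hk1 : (QuotientGroup.mk (ζ ^ (m * k)) : G) = 1 := by
          rw [pow_mul, QuotientGroup.mk_pow]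
          exact pow_orderOf_eq_one _
        have h2 : n ∣ m * k * (j - 1) := hcore (m * k) hk1
        rw [← hmn] at h2
        have h3 : p ^ t ∣ k * (j - 1) := by
          rw [mul_assoc] at h2
          exact (Nat.mul_dvd_mul_iff_left hmpos).mp h2
        exact hcopt.dvd_of_dvd_mul_right h3
    -- ζ^m is not in F
    have hζtF : ¬ ∃ c : F, algebraMap F K c = (ζ : K) ^ m := by
      intro hc
      have h1 : (QuotientGroup.mk (ζ ^ m) : G) = 1 := by
        rw [hmem]
        obtain ⟨c, hc⟩ := hc
        exact ⟨c, by rw [hc, hvm]⟩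
      have h2 : orderOf (QuotientGroup.mk (ζ ^ m) : G) = 1 := by
        rw [h1, orderOf_one]
      rw [hordt] at h2
      have : 1 < p ^ t := Nat.one_lt_pow (by omega) hp.one_lt
      omega
    have hintt : IsIntegral F ((ζ : K) ^ m) := hint.pow m
    haveI hfd : FiniteDimensional F (IntermediateField.adjoin F {((ζ : K))}) :=
      IntermediateField.adjoin.finiteDimensional hint
    haveI hfdt : FiniteDimensional F (IntermediateField.adjoin F {((ζ : K) ^ m)}) :=
      IntermediateField.adjoin.finiteDimensional hintt
    -- the adjoin equality
    have hle : IntermediateField.adjoin F {((ζ : K) ^ m)} ≤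
        IntermediateField.adjoin F {((ζ : K))} := by
      rw [IntermediateField.adjoin_simple_le_iff]
      exact pow_mem (IntermediateField.mem_adjoin_simple_self F ((ζ : K))) m
    have hfr1 : Module.finrank F (IntermediateField.adjoin F {((ζ : K) ^ m)}) ≠ 1 := by
      intro h1
      have h2 := IntermediateField.finrank_eq_one_iff.mp h1
      have h3 : (ζ : K) ^ m ∈ (⊥ : IntermediateField F K) := by
        rw [← h2]
        exact IntermediateField.mem_adjoin_simple_self F ((ζ : K) ^ m)
      rw [IntermediateField.mem_bot] at h3
      obtain ⟨c, hc⟩ := h3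
      exact hζtF ⟨c, hc⟩
    have hfrpos : 0 < Module.finrank F (IntermediateField.adjoin F {((ζ : K) ^ m)}) :=
      Module.finrank_pos
    have hadj : IntermediateField.adjoin F {((ζ : K) ^ m)} =
        IntermediateField.adjoin F {((ζ : K))} := by
      apply IntermediateField.eq_of_le_of_finrank_le hle
      rw [hdeg]
      omega
    have hfr2 : Module.finrank F (IntermediateField.adjoin F {((ζ : K) ^ m)}) = 2 := by
      rw [hadj, hdeg]
    -- the minimal polynomial
    have hdegt : (minpoly F ((ζ : K) ^ m)).natDegree = 2 := by
      rw [← IntermediateField.adjoin.finrank hintt]; exact hfr2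
    set a : K := (ζ : K) ^ m with hadef
    set b : K := ((ζ : K) ^ m)⁻¹ with hbdef
    have ha0 : a ≠ 0 := pow_ne_zero _ (Units.ne_zero ζ)
    have hab : a * b = 1 := mul_inv_cancel₀ ha0
    -- ζ^(m(1+j)) = 1
    have hm1j : a ^ (1 + j) = 1 := by
      rw [hadef, ← pow_mul, hζK.pow_eq_one_iff_dvd, ← hmn]
      exact Nat.mul_dvd_mul_left m hptj
    have hba : b = a⁻¹ := by rw [hbdef, hadef]
    -- a^j = b
    have haj : a ^ j = b := by
      have h1 : a ^ (j + 1) = 1 := by rw [add_comm]; exact hm1j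
      have h2 : a * a ^ j = 1 := by rw [← pow_succ']; exact h1
      rw [hba]
      exact (inv_eq_of_mul_eq_one_right h2).symm
    -- a ≠ b
    have hne2 : a ≠ b := by
      intro h
      have h1 : a * a = 1 := by
        rw [← hab]
        exact congrArg (a * ·) h
      have h2 : n ∣ m * 2 := by
        rw [← hζK.pow_eq_one_iff_dvd, pow_mul, ← hadef, sq]
        exact h1
      rw [← hmn] at h2
      have h3 : p ^ t ∣ 2 := (Nat.mul_dvd_mul_iff_left hmpos).mp h2
      have h4 : p ∣ 2 := (dvd_pow_self p (by omega : t ≠ 0)).trans h3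
      exact hodd ((Nat.prime_dvd_prime_iff_eq hp Nat.prime_two).mp h4)
    -- b is a root of the minimal polynomial of a
    have hbroot : (Polynomial.aeval b) (minpoly F a) = 0 := by
      have hx : (Polynomial.aeval (pb.gen ^ m)) (minpoly F a) = 0 := by
        have h1 := Polynomial.aeval_algebraMap_apply K (pb.gen ^ m) (minpoly F a)
        have h2 : algebraMap (IntermediateField.adjoin F {((ζ : K))}) K (pb.gen ^ m) = a := by
          rw [map_pow, hadef]
          congr 1
        rw [h2, minpoly.aeval] at h1
        exact (map_eq_zero_iff _ (algebraMap (IntermediateField.adjoin F {((ζ : K))}) K).injective).mp h1.symm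
      have h3 := Polynomial.aeval_algHom_apply φ (pb.gen ^ m) (minpoly F a)
      rw [hx, map_zero] at h3
      have h4 : φ (pb.gen ^ m) = η ^ m := by rw [map_pow, hφgen]
      rw [h4] at h3
      have h5 : η ^ m = b := by
        rw [← hj, ← pow_mul, mul_comm, pow_mul, ← hadef, haj]
      rwa [h5] at h3
    -- assemble the factorization
    set Pt : K[X] := (minpoly F a).map (algebraMap F K) with hPt
    have hPtmonic : Pt.Monic := (minpoly.monic hintt).map _
    have hPtdeg : Pt.natDegree = 2 := by rw [hPt, natDegree_map]; exact hdegt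
    have haroot : (X - C a) ∣ Pt := by
      rw [dvd_iff_isRoot]
      simpa [hPt, IsRoot, eval_map, ← aeval_def] using minpoly.aeval F a
    have hbroot' : (X - C b) ∣ Pt := by
      rw [dvd_iff_isRoot]
      simpa [hPt, IsRoot, eval_map, ← aeval_def] using hbroot
    have hcp : IsCoprime (X - C a) (X - C b) :=
      isCoprime_X_sub_C_of_isUnit_sub (by
        apply IsUnit.of_mul_eq_one (a - b)⁻¹
        exact mul_inv_cancel₀ (sub_ne_zero.mpr hne2))
    have hdvd2 : (X - C a) * (X - C b) ∣ Pt := hcp.mul_dvd haroot hbroot'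
    have hfac : Pt = (X - C a) * (X - C b) := by
      apply eq_of_monic_of_dvd_of_natDegree_le ((monic_X_sub_C a).mul (monic_X_sub_C b))
        hPtmonic hdvd2
      rw [hPtdeg, Polynomial.natDegree_mul (X_sub_C_ne_zero a) (X_sub_C_ne_zero b),
        natDegree_X_sub_C, natDegree_X_sub_C]
    have hfinal : Pt = X ^ 2 - C (a + b) * X + 1 := by
      rw [hfac]
      have : (1 : K[X]) = C (a * b) := by rw [hab, map_one]
      rw [this, C_add, C_mul]
      ring
    refine ⟨?_, ?_, ?_⟩
    · rw [show (((ζ ^ m : Kˣ)) : K) = a from hvm]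
      exact hadj.symm
    · exact hordt
    · rw [hvm, ← hba]
      exact hfinal
  exact ⟨fun t h1 h2 => (main t h1 h2).1, ⟨hpEo, hpE1⟩,
    fun t h1 h2 => (main t h1 h2).2.1, fun t h1 h2 => (main t h1 h2).2.2⟩
end

section
/- Let F be a field with char(F) ≠ 2, e > 1, and ζ a primitive 2^e-th root of unity with [F(ζ):F] = 2. If o_F(ζ) = 2^t, then t = 1 or t = e − 1. -/
theorem stmt18 (F K : Type*) [Field F] [Field K] [Algebra F K] [IsAlgClosure F K]
    (hchar2 : ringChar F ≠ 2)
    (e : ℕ) (he : 1 < e) (ζ : Kˣ) (hζ : IsPrimitiveRoot ζ (2 ^ e))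
    (hdeg : Module.finrank F (IntermediateField.adjoin F {((ζ : K))}) = 2)
    (t : ℕ)
    (ht : orderOf (QuotientGroup.mk ζ :
        Kˣ ⧸ (Units.map (algebraMap F K).toMonoidHom).range) = 2 ^ t) :
    t = 1 ∨ t = e - 1 := by
  classical
  set S : Subgroup Kˣ := (Units.map (algebraMap F K).toMonoidHom).range with hSdef
  set z : K := (ζ : K) with hzdef
  -- membership in S via K
  have hS : ∀ x : Kˣ, x ∈ S ↔ (x : K) ∈ Set.range (algebraMap F K) := by
    intro x
    constructor
    · rintro ⟨v, rfl⟩; exact ⟨v, rfl⟩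
    · rintro ⟨c, hc⟩
      have hc0 : c ≠ 0 := by
        rintro rfl
        exact x.ne_zero (by simpa using hc.symm)
      exact ⟨Units.mk0 c hc0, Units.ext hc⟩
  have hmem : ∀ n : ℕ, ζ ^ n ∈ S ↔ 2 ^ t ∣ n := by
    intro n
    rw [← QuotientGroup.eq_one_iff, QuotientGroup.mk_pow, ← ht,
      orderOf_dvd_iff_pow_eq_one]
  have hmemK : ∀ n : ℕ, z ^ n ∈ Set.range (algebraMap F K) ↔ 2 ^ t ∣ n := by
    intro n
    rw [hzdef, ← Units.val_pow_eq_pow_val, ← hS, hmem]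
  -- t ≥ 1
  have ht1 : 1 ≤ t := by
    by_contra h
    have ht0 : t = 0 := by omega
    have : ζ ^ 1 ∈ S := (hmem 1).2 (by simp [ht0])
    rw [pow_one, hS] at this
    have hbot : IntermediateField.adjoin F {z} = ⊥ :=
      IntermediateField.adjoin_simple_eq_bot_iff.mpr
        ((IntermediateField.mem_bot).2 this)
    rw [hzdef] at hdeg
    rw [hbot, IntermediateField.finrank_bot] at hdeg
    exact absurd hdeg (by norm_num)
  -- z has order 2^e
  have horder : orderOf z = 2 ^ e := by
    have h1 : orderOf ζ = 2 ^ e := (IsPrimitiveRoot.eq_orderOf hζ).symm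
    rw [hzdef, orderOf_units]
    exact h1
  have hz1 : z ^ 2 ^ e = 1 := by
    rw [← horder]; exact pow_orderOf_eq_one z
  have hzneg : z ^ 2 ^ (e - 1) = -1 := by
    have hsq : (z ^ 2 ^ (e - 1)) ^ 2 = 1 := by
      rw [← pow_mul, ← pow_succ]
      have : e - 1 + 1 = e := by omega
      rw [this]; exact hz1
    have hne : z ^ 2 ^ (e - 1) ≠ 1 := by
      intro h
      have := orderOf_dvd_of_pow_eq_one h
      rw [horder] at this
      have := Nat.le_of_dvd (Nat.pow_pos (by norm_num)) this
      exact absurd (Nat.pow_le_pow_iff_right (by norm_num : 1 < 2) |>.1 this) (by omega)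
    have : (z ^ 2 ^ (e - 1) - 1) * (z ^ 2 ^ (e - 1) + 1) = 0 := by ring_nf; linear_combination hsq
    rcases mul_eq_zero.1 this with h | h
    · exact absurd (by linear_combination h) hne
    · linear_combination h
  -- t ≤ e - 1
  have hte : t ≤ e - 1 := by
    have : z ^ 2 ^ (e - 1) ∈ Set.range (algebraMap F K) :=
      ⟨-1, by rw [map_neg, map_one, hzneg]⟩
    have hd := (hmemK _).1 this
    exact Nat.pow_dvd_pow_iff_le_right (by norm_num : 1 < 2) |>.1 hd
  -- main contradiction if 2 ≤ t ≤ e - 2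
  by_contra hcon
  push_neg at hcon
  have ht2 : 2 ≤ t := by omega
  have hte2 : t ≤ e - 2 := by omega
  -- elements
  set ω : K := z ^ 2 ^ (t - 2) with hω
  set ξ : K := z ^ 2 ^ (t - 1) with hξ
  have hω2 : ω ^ 2 = ξ := by
    rw [hω, hξ, ← pow_mul, ← pow_succ, show t - 2 + 1 = t - 1 by omega]
  have hξ2 : ξ ^ 2 = z ^ 2 ^ t := by
    rw [hξ, ← pow_mul, ← pow_succ, show t - 1 + 1 = t by omega]
  have hξnot : ξ ∉ Set.range (algebraMap F K) := by
    rw [hξ, hmemK]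
    intro hd
    have := Nat.pow_dvd_pow_iff_le_right (by norm_num : 1 < 2) |>.1 hd
    omega
  obtain ⟨ca, hca⟩ : z ^ 2 ^ t ∈ Set.range (algebraMap F K) := (hmemK _).2 dvd_rfl
  obtain ⟨cj, hcj⟩ : z ^ 2 ^ (e - 2) ∈ Set.range (algebraMap F K) := by
    rw [hmemK]
    exact pow_dvd_pow 2 (by omega)
  have hJ : (algebraMap F K cj) ^ 2 = -1 := by
    rw [hcj, ← pow_mul, ← pow_succ]
    have : e - 2 + 1 = e - 1 := by omega
    rw [this, hzneg]
  -- ω has degree 2 over F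
  set E := IntermediateField.adjoin F {z} with hE
  have hfd : FiniteDimensional F E := by
    have : Module.finrank F E = 2 := hdeg
    exact FiniteDimensional.of_finrank_eq_succ this
  have hωE : ω ∈ E := by
    rw [hω]
    exact pow_mem (IntermediateField.mem_adjoin_simple_self F z) _
  set wE : E := ⟨ω, hωE⟩ with hwE
  have hint : IsIntegral F wE := IsIntegral.of_finite F wE
  have hminE : minpoly F ω = minpoly F wE := by
    have : algebraMap E K wE = ω := rfl
    rw [← this, minpoly.algebraMap_eq (algebraMap E K).injective]
  have hintω : IsIntegral F ω := by
    rw [show ω = algebraMap E K wE from rfl]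
    exact hint.algebraMap
  have hdvd : (minpoly F ω).natDegree ∣ 2 := by
    rw [hminE, ← hdeg]
    exact minpoly.degree_dvd hint
  have hωnot : ω ∉ Set.range (algebraMap F K) := by
    rw [hω, hmemK]
    intro hd
    have := Nat.pow_dvd_pow_iff_le_right (by norm_num : 1 < 2) |>.1 hd
    omega
  have hndeg : (minpoly F ω).natDegree = 2 := by
    have h0 : (minpoly F ω).natDegree ≠ 0 := (minpoly.natDegree_pos hintω).ne'
    have h1 : (minpoly F ω).natDegree ≠ 1 := by
      intro h
      exact hωnot ((minpoly.natDegree_eq_one_iff).1 h)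
    rcases (Nat.prime_two.eq_one_or_self_of_dvd _ hdvd) with h | h
    · exact absurd h h1
    · exact h
  -- extract coefficients
  set p := minpoly F ω with hp
  have haev : Polynomial.aeval ω p = 0 := minpoly.aeval F ω
  have hmonic : p.Monic := minpoly.monic hintω
  have hsumr := Polynomial.aeval_eq_sum_range (p := p) ω
  rw [haev, hndeg] at hsumr
  have hc2 : p.coeff 2 = 1 := by
    have := hmonic.coeff_natDegree
    rwa [hndeg] at this
  simp only [Finset.sum_range_succ, Finset.sum_range_zero, zero_add, pow_zero, pow_one,
    Algebra.smul_def, mul_one, hc2, map_one, one_mul] at hsumr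
  -- hsumr : 0 = algebraMap F K (p.coeff 0) + algebraMap F K (p.coeff 1) * ω + ω ^ 2
  set B := algebraMap F K (p.coeff 1) with hB
  set C := algebraMap F K (p.coeff 0) with hC
  have heq2 : ξ + B * ω + C = 0 := by
    rw [← hω2]; linear_combination -hsumr
  have hA : ξ ^ 2 = algebraMap F K ca := by rw [hξ2, ← hca]
  set A := algebraMap F K ca with hAdef
  by_cases hb1 : p.coeff 1 = 0
  · apply hξnot
    refine ⟨-(p.coeff 0), ?_⟩
    rw [map_neg]
    have : B = 0 := by rw [hB, hb1, map_zero]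
    rw [this] at heq2
    linear_combination -heq2
  · have hBne : B ≠ 0 := by
      rw [hB]
      exact fun h => hb1 ((map_eq_zero_iff _ (algebraMap F K).injective).1 h)
    have hkey : (B ^ 2 - 2 * C) * ξ = A + C ^ 2 := by
      linear_combination (B * ω - ξ - C) * heq2 - B ^ 2 * hω2 + hA
    by_cases hd : p.coeff 1 ^ 2 - 2 * p.coeff 0 = 0
    · have hDK : B ^ 2 - 2 * C = 0 := by
        rw [hB, hC, ← map_pow, ← map_ofNat (algebraMap F K) 2, ← map_mul, ← map_sub, hd, map_zero]
      have hAC : A = -C ^ 2 := by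
        rw [hDK] at hkey
        linear_combination -hkey
      have hfac : (ξ - algebraMap F K cj * C) * (ξ + algebraMap F K cj * C) = 0 := by
        linear_combination hA + hAC - C ^ 2 * hJ
      rcases mul_eq_zero.1 hfac with h | h
      · exact hξnot ⟨cj * p.coeff 0, by rw [map_mul, ← hC]; exact (sub_eq_zero.mp h).symm⟩
      · exact hξnot ⟨-(cj * p.coeff 0), by
          rw [map_neg, map_mul, ← hC]
          exact (neg_eq_of_add_eq_zero_left h)⟩
    · have hDne : B ^ 2 - 2 * C ≠ 0 := by
        rw [hB, hC, ← map_pow, ← map_ofNat (algebraMap F K) 2, ← map_mul, ← map_sub]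
        exact fun h => hd ((map_eq_zero_iff _ (algebraMap F K).injective).1 h)
      apply hξnot
      refine ⟨(ca + p.coeff 0 ^ 2) / (p.coeff 1 ^ 2 - 2 * p.coeff 0), ?_⟩
      rw [map_div₀, map_add, map_pow, map_sub, map_mul, map_pow, map_ofNat]
      rw [div_eq_iff (by rw [← hB, ← hC] at *; exact hDne)]
      rw [← hB, ← hC, ← hAdef]
      linear_combination -hkey
end

section
/- Let F be a field with char(F) ≠ 2 and suppose there exists e ≥ 1 such that ζ_{2^e} ∉ F but ζ_{2^e} + ζ_{2^e}^{−1} ∈ F or ζ_{2^e} − ζ_{2^e}^{−1} ∈ F, where ζ_{2^e} is a primitive 2^e-th root of unity. Then [F(ζ_{2^e}):F] = 2 and F(ζ_{2^e}) = F(i), where i is a primitive 4th root of unity; in particular i ∉ F. -/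
open Polynomial IntermediateField

/-- If `x` satisfies a monic quadratic over `F` and is not in `F`, then `[F(x):F] = 2`. -/
lemma quad_finrank {F K : Type*} [Field F] [Field K] [Algebra F K] (x : K)
    (hx : ¬ ∃ a : F, algebraMap F K a = x) (b c : F)
    (hroot : x ^ 2 + algebraMap F K b * x + algebraMap F K c = 0) :
    Module.finrank F (IntermediateField.adjoin F {x}) = 2 := by
  set p : F[X] := X ^ 2 + (C b * X + C c) with hp
  have hdlt : (C b * X + C c).degree < ((2 : ℕ) : WithBot ℕ) := by
    refine lt_of_le_of_lt degree_linear_le ?_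
    norm_num
  have hm : p.Monic := monic_X_pow_add hdlt
  have hroot' : Polynomial.aeval x p = 0 := by
    simp only [hp, map_add, map_mul, map_pow, aeval_X, aeval_C]
    linear_combination hroot
  have hint : IsIntegral F x := ⟨p, hm, hroot'⟩
  have hdeg : p.natDegree = 2 := by
    have h2 : p.degree = (2 : ℕ) := by
      rw [hp, degree_add_eq_left_of_degree_lt (by simpa using hdlt), degree_X_pow]
    exact natDegree_eq_of_degree_eq_some h2
  have hle : (minpoly F x).natDegree ≤ 2 := by
    have := Polynomial.natDegree_le_of_dvd (minpoly.dvd F x hroot') hm.ne_zero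
    omega
  have hge : 2 ≤ (minpoly F x).natDegree := by
    refine (minpoly.two_le_natDegree_iff hint).mpr ?_
    rintro ⟨a, ha⟩
    exact hx ⟨a, ha⟩
  rw [IntermediateField.adjoin.finrank hint]
  omega

/-- A primitive 4th root of unity squares to `-1`. -/
lemma prim4_sq {K : Type*} [Field K] {x : K} (h : IsPrimitiveRoot x 4) : x ^ 2 = -1 := by
  have h4 : x ^ 4 = 1 := h.pow_eq_one
  have h2 : x ^ 2 ≠ 1 := h.pow_ne_one_of_pos_of_lt (by norm_num) (by norm_num)
  have hz : (x ^ 2 - 1) * (x ^ 2 + 1) = 0 := by linear_combination h4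
  rcases mul_eq_zero.mp hz with h' | h'
  · exact absurd (by linear_combination h') h2
  · linear_combination h'

/-- Key induction: under the hypotheses, no primitive 4th root of unity lies in `F`. -/
lemma aux_i_notin {F K : Type*} [Field F] [Field K] [Algebra F K] :
    ∀ e : ℕ, 2 ≤ e → ∀ ζ : K, IsPrimitiveRoot ζ (2 ^ e) →
      (¬ ∃ a : F, algebraMap F K a = ζ) →
      ((∃ a : F, algebraMap F K a = ζ + ζ⁻¹) ∨ (∃ a : F, algebraMap F K a = ζ - ζ⁻¹)) →
      ∀ j : K, IsPrimitiveRoot j 4 → ¬ ∃ a : F, algebraMap F K a = j := by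
  intro e he
  induction e, he using Nat.le_induction with
  | base =>
    intro ζ hζ hnot _ j hj hjF
    obtain ⟨a, ha⟩ := hjF
    have hζ4 : IsPrimitiveRoot ζ 4 := by norm_num at hζ; exact hζ
    have h1 : ζ ^ 2 = -1 := prim4_sq hζ4
    have h2 : j ^ 2 = -1 := prim4_sq hj
    have hz : (ζ - j) * (ζ + j) = 0 := by linear_combination h1 - h2
    rcases mul_eq_zero.mp hz with h' | h'
    · exact hnot ⟨a, by rw [ha]; linear_combination -h'⟩
    · exact hnot ⟨-a, by rw [map_neg, ha]; linear_combination -h'⟩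
  | succ e he ih =>
    intro ζ hζ hnot hsum j hj
    have hpos : (0 : ℕ) < 2 ^ (e + 1) := by positivity
    have hζ0 : ζ ≠ 0 := hζ.ne_zero (by positivity)
    have hζ2 : IsPrimitiveRoot (ζ ^ 2) (2 ^ e) :=
      IsPrimitiveRoot.pow hpos hζ ((pow_succ 2 e).trans (mul_comm _ _))
    have h8 : (8 : ℕ) ≤ 2 ^ (e + 1) := by
      calc (8 : ℕ) = 2 ^ 3 := by norm_num
      _ ≤ 2 ^ (e + 1) := Nat.pow_le_pow_right (by norm_num) (by omega)
    have hsq_ne_one : ζ ^ 2 ≠ 1 :=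
      hζ.pow_ne_one_of_pos_of_lt (by norm_num) (by omega)
    have hsq_ne_neg : ζ ^ 2 ≠ -1 := by
      intro h
      have h4 : ζ ^ 4 = 1 := by
        have : ζ ^ 4 = (ζ ^ 2) ^ 2 := by ring
        rw [this, h]; ring
      exact hζ.pow_ne_one_of_pos_of_lt (by norm_num) (by omega) h4
    rcases hsum with ⟨a, ha⟩ | ⟨a, ha⟩
    · -- case `ζ + ζ⁻¹ ∈ F`
      have key : algebraMap F K a * ζ = ζ ^ 2 + 1 := by
        rw [ha]; field_simp
      have ha0 : a ≠ 0 := by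
        rintro rfl
        simp only [map_zero, zero_mul] at key
        exact hsq_ne_neg (by linear_combination -key)
      have hnot' : ¬ ∃ b : F, algebraMap F K b = ζ ^ 2 := by
        rintro ⟨b, hb⟩
        refine hnot ⟨(b + 1) / a, ?_⟩
        have hma : algebraMap F K a ≠ 0 := by
          simpa using (map_ne_zero (algebraMap F K)).mpr ha0
        rw [map_div₀, map_add, map_one, hb]
        field_simp
        linear_combination -key
      refine ih (ζ ^ 2) hζ2 hnot' (Or.inl ⟨a ^ 2 - 2, ?_⟩) j hj
      rw [map_sub, map_pow, map_ofNat, ha]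
      field_simp
      ring
    · -- case `ζ - ζ⁻¹ ∈ F`
      have key : algebraMap F K a * ζ = ζ ^ 2 - 1 := by
        rw [ha]; field_simp
      have ha0 : a ≠ 0 := by
        rintro rfl
        simp only [map_zero, zero_mul] at key
        exact hsq_ne_one (by linear_combination -key)
      have hnot' : ¬ ∃ b : F, algebraMap F K b = ζ ^ 2 := by
        rintro ⟨b, hb⟩
        refine hnot ⟨(b - 1) / a, ?_⟩
        have hma : algebraMap F K a ≠ 0 := by
          simpa using (map_ne_zero (algebraMap F K)).mpr ha0
        rw [map_div₀, map_sub, map_one, hb]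
        field_simp
        linear_combination -key
      refine ih (ζ ^ 2) hζ2 hnot' (Or.inl ⟨a ^ 2 + 2, ?_⟩) j hj
      rw [map_add, map_pow, map_ofNat, ha]
      field_simp
      ring

theorem stmt19 (F K : Type*) [Field F] [Field K] [Algebra F K] [IsAlgClosure F K]
    (hchar2 : ringChar F ≠ 2)
    (e : ℕ) (he : 1 ≤ e) (ζ : K) (hζ : IsPrimitiveRoot ζ (2 ^ e))
    (hnotF : ¬ ∃ a : F, algebraMap F K a = ζ)
    (hsum : (∃ a : F, algebraMap F K a = ζ + ζ⁻¹) ∨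
            (∃ a : F, algebraMap F K a = ζ - ζ⁻¹)) :
    Module.finrank F (IntermediateField.adjoin F {ζ}) = 2 ∧
    ∀ i : K, IsPrimitiveRoot i 4 →
      IntermediateField.adjoin F {ζ} = IntermediateField.adjoin F {i} ∧
      ¬ ∃ a : F, algebraMap F K a = i := by
  have hζ0 : ζ ≠ 0 := hζ.ne_zero (by positivity)
  -- e ≥ 2
  have he2 : 2 ≤ e := by
    by_contra h
    have he1 : e = 1 := by omega
    subst he1
    have hζ' : IsPrimitiveRoot ζ 2 := by norm_num at hζ; exact hζ
    have h2 : ζ ^ 2 = 1 := hζ'.pow_eq_one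
    have h1 : ζ ≠ 1 := hζ'.ne_one one_lt_two
    have : ζ = -1 := by
      have hz : (ζ - 1) * (ζ + 1) = 0 := by linear_combination h2
      rcases mul_eq_zero.mp hz with h' | h'
      · exact absurd (by linear_combination h') h1
      · linear_combination h'
    exact hnotF ⟨-1, by rw [map_neg, map_one, this]⟩
  have hinotF : ∀ j : K, IsPrimitiveRoot j 4 → ¬ ∃ a : F, algebraMap F K a = j :=
    aux_i_notin e he2 ζ hζ hnotF hsum
  -- ζ^(2^(e-2)) is a primitive 4th root of unity
  have hk : IsPrimitiveRoot (ζ ^ 2 ^ (e - 2)) 4 := by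
    refine IsPrimitiveRoot.pow (by positivity) hζ ?_
    rw [show (4 : ℕ) = 2 ^ 2 from rfl, ← pow_add]
    congr 1
    omega
  -- finrank F F(ζ) = 2
  have hfr : Module.finrank F (IntermediateField.adjoin F {ζ}) = 2 := by
    rcases hsum with ⟨a, ha⟩ | ⟨a, ha⟩
    · refine quad_finrank ζ hnotF (-a) 1 ?_
      rw [map_neg, map_one, ha]
      field_simp
      ring
    · refine quad_finrank ζ hnotF (-a) (-1) ?_
      rw [map_neg, map_neg, map_one, ha]
      field_simp
      ring
  refine ⟨hfr, fun i hi => ?_⟩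
  have hiF : ¬ ∃ a : F, algebraMap F K a = i := hinotF i hi
  have hi2 : i ^ 2 = -1 := prim4_sq hi
  have hfr' : Module.finrank F (IntermediateField.adjoin F {i}) = 2 := by
    refine quad_finrank i hiF 0 1 ?_
    rw [map_zero, map_one]
    rw [zero_mul, add_zero]
    linear_combination hi2
  -- i ∈ F(ζ)
  have hk2 : (ζ ^ 2 ^ (e - 2)) ^ 2 = -1 := prim4_sq hk
  have hmem : i ∈ IntermediateField.adjoin F {ζ} := by
    have hkm : ζ ^ 2 ^ (e - 2) ∈ IntermediateField.adjoin F {ζ} :=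
      pow_mem (IntermediateField.mem_adjoin_simple_self F ζ) _
    have hz : (i - ζ ^ 2 ^ (e - 2)) * (i + ζ ^ 2 ^ (e - 2)) = 0 := by
      linear_combination hi2 - hk2
    rcases mul_eq_zero.mp hz with h' | h'
    · have : i = ζ ^ 2 ^ (e - 2) := by linear_combination h'
      rw [this]; exact hkm
    · have : i = -(ζ ^ 2 ^ (e - 2)) := by linear_combination h'
      rw [this]; exact neg_mem hkm
  have hle : IntermediateField.adjoin F {i} ≤ IntermediateField.adjoin F {ζ} := by
    rw [IntermediateField.adjoin_le_iff]
    simpa using hmem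
  have hint : IsIntegral F ζ :=
    ⟨X ^ (2 ^ e) - C 1, monic_X_pow_sub_C 1 (by positivity),
      by simp [hζ.pow_eq_one]⟩
  have hfd : FiniteDimensional F (IntermediateField.adjoin F {ζ}) :=
    IntermediateField.adjoin.finiteDimensional hint
  refine ⟨(IntermediateField.eq_of_le_of_finrank_eq hle ?_).symm, hiF⟩
  rw [hfr, hfr']
end
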